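/- Let X be a set of vertices in a graph G and let C(X) be the d-critical set of X. If B is an escape-way in G with V_out(B) ⊆ C(X), then every vertex v ∉ C(X) satisfies |A_{K(B)}(v)| ≥ deg_G(v) − d. -/

import Mathlib

/-- `u` lies within distance at most 2 of the set `S` in the graph `G - v`
(members of `S` have distance 0). -/
def Near2 {V : Type*} (G : SimpleGraph V) (v : V) (S : Set V) (u : V) : Prop :=
  u ∈ S ∨ (∃ x ∈ S, x ≠ v ∧ G.Adj u x) ∨
    (∃ x ∈ S, ∃ w, x ≠ v ∧ w ≠ v ∧ G.Adj u w ∧ G.Adj w x)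

/-- The bootstrap percolation rule: `v` becomes critical for `S` if at least `d`
neighbours of `v` lie within distance at most 2 of `S` in `G - v`. -/
def CritRule {V : Type*} (G : SimpleGraph V) (d : ℕ) (S : Set V) (v : V) : Prop :=
  ∃ F : Finset V, d ≤ F.card ∧ ∀ u ∈ F, G.Adj v u ∧ Near2 G v S u

/-- The `d`-critical set of `X`: the terminal set of the bootstrap percolation process,
i.e. the least superset of `X` closed under the rule. -/
def CritSet {V : Type*} (G : SimpleGraph V) (d : ℕ) (X : Set V) : Set V :=
  ⋂₀ {S : Set V | X ⊆ S ∧ ∀ v, CritRule G d S v → v ∈ S}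

/-- An escape-way in `G`. -/
def IsEscapeWay {V : Type*} (G : SimpleGraph V) (D : V → V → Prop) : Prop :=
  (∀ u v, D u v → G.Adj u v) ∧
  (∀ v u w, D u v → D w v → u = w) ∧
  (∀ x y, (∃ a, D a x) → (∃ b, D b y) → G.Adj x y → Xor' (D x y) (D y x))

/-- `K(B)`. -/
def KExt {V : Type*} (G : SimpleGraph V) (B : V → V → Prop) : V → V → Prop :=
  fun v w => B v w ∨ ∃ u, B u v ∧ G.Adj v w ∧ w ≠ u

/-- The available neighbourhood `A_B(v) = N_G(v) \ (V_in(B − v) ∪ N⁻_B(v))`. -/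
def Avail {V : Type*} (G : SimpleGraph V) (B : V → V → Prop) (v : V) : Set V :=
  {u | G.Adj v u ∧ ¬ (∃ z, z ≠ v ∧ B z u) ∧ ¬ B u v}


lemma near2_mono {V : Type*} (G : SimpleGraph V) (v : V) {S T : Set V} (h : S ⊆ T) {u : V} :
    Near2 G v S u → Near2 G v T u := by
  rintro (h1 | ⟨x, hx, hxv, ha⟩ | ⟨x, hx, w, hxv, hwv, h1, h2⟩)
  · exact Or.inl (h h1)
  · exact Or.inr (Or.inl ⟨x, h hx, hxv, ha⟩)
  · exact Or.inr (Or.inr ⟨x, h hx, w, hxv, hwv, h1, h2⟩)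

lemma critSet_closed {V : Type*} (G : SimpleGraph V) (d : ℕ) (X : Set V) {v : V}
    (h : CritRule G d (CritSet G d X) v) : v ∈ CritSet G d X := by
  intro S hS
  apply hS.2
  obtain ⟨F, hF, hu⟩ := h
  exact ⟨F, hF, fun u hu' => ⟨(hu u hu').1,
    near2_mono G v (Set.sInter_subset_of_mem hS) (hu u hu').2⟩⟩

/-- if `B` is an escape-way with `V_out(B) ⊆ C(X)`, then every vertex
`v ∉ C(X)` satisfies `|A_{K(B)}(v)| ≥ deg_G(v) − d`. -/
theorem stmt8 {V : Type*} (G : SimpleGraph V) (d : ℕ) (hd : 1 ≤ d) (X : Set V)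
    (B : V → V → Prop) (hB : IsEscapeWay G B)
    (hout : ∀ v, (∃ w, B v w) → v ∈ CritSet G d X) :
    ∀ v, v ∉ CritSet G d X →
      (G.neighborSet v).ncard ≤ (Avail G (KExt G B) v).ncard + d := by
  intro v hv
  by_cases hfin : (G.neighborSet v).Finite
  · have hsub : Avail G (KExt G B) v ⊆ G.neighborSet v := fun u hu => hu.1
    have hDfin : (G.neighborSet v \ Avail G (KExt G B) v).Finite := hfin.diff
    have hnear : ∀ u ∈ G.neighborSet v \ Avail G (KExt G B) v,
        Near2 G v (CritSet G d X) u := by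
      rintro u ⟨hadj, hna⟩
      have hPQ : (∃ z, z ≠ v ∧ KExt G B z u) ∨ KExt G B u v := by
        by_contra hc
        push_neg at hc
        exact hna ⟨hadj, fun ⟨z, h1, h2⟩ => hc.1 z h1 h2, hc.2⟩
      rcases hPQ with ⟨z, hzv, hBzu | ⟨t, htz, hzu, hut⟩⟩ | (hBuv | ⟨t, htu, huv, hvt⟩)
      · exact Or.inr (Or.inl ⟨z, hout z ⟨u, hBzu⟩, hzv, (hB.1 z u hBzu).symm⟩)
      · have htC : t ∈ CritSet G d X := hout t ⟨z, htz⟩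
        have htv : t ≠ v := by rintro rfl; exact hv htC
        exact Or.inr (Or.inr ⟨t, htC, z, htv, hzv, hzu.symm, (hB.1 t z htz).symm⟩)
      · exact Or.inl (hout u ⟨v, hBuv⟩)
      · exact Or.inr (Or.inl ⟨t, hout t ⟨u, htu⟩, fun h => hvt h.symm, (hB.1 t u htu).symm⟩)
    have hcard : (G.neighborSet v \ Avail G (KExt G B) v).ncard ≤ d := by
      by_contra hgt
      push_neg at hgt
      apply hv
      apply critSet_closed
      refine ⟨hDfin.toFinset, ?_, ?_⟩
      · rw [Set.ncard_eq_toFinset_card _ hDfin] at hgt; omega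
      · intro u hu
        rw [Set.Finite.mem_toFinset] at hu
        exact ⟨hu.1, hnear u hu⟩
    have := Set.ncard_diff_add_ncard_of_subset hsub hfin
    omega
  · rw [Set.Infinite.ncard hfin]
    exact Nat.zero_le _
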